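/- Let ω > 0, κ ≥ 0 be reals, let α > 0 and α', β, β' be reals, and let n, m ∈ ℕ. Define the density ϱ(r) = (α / ω^{α'}) · (ω^{β'−α'} · r^{2(α−β)})^{κ·m} · r^{2(α−1)} · exp(−r^{2α} / ω^{α'}) for r > 0. Then the generalized moment identity 2 ∫_0^∞ ϱ(r) · r^{2(α·n + β·κ·m) + 1} / ω^{α'·n + β'·κ·m} dr = Γ(1 + κ·m + n) holds, where Γ(1 + κ·m + n) = Γ(γ + n) with γ = 1 + κ·m. (This is the solution of the generalized moment problem for the sub-classes of γ-deformed second-class coherent states with one degree of freedom.) -/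

import Mathlib

open MeasureTheory Real Set

/-! With `s = 1 + κm + n`, all powers of `r` and of `ω` in the integrand combine, leaving
`(α / ω^(α's)) r^(2αs-1) exp(-r^(2α)/ω^α')`; the substitution `t = r^(2α)/ω^α'` turns
its integral into `Γ(s) / 2`. -/

theorem integral_rpow_mul_exp_neg_rpow_div {p s c : ℝ} (hp : 0 < p) (hs : 0 < s) (hc : 0 < c) :
    ∫ r in Ioi (0 : ℝ), r ^ (p * s - 1) * exp (-r ^ p / c) = c ^ s * Gamma s / p := by
  have hexp : ∀ r : ℝ, exp (-r ^ p / c) = exp (-c⁻¹ * r ^ p) := fun r => by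
    rw [neg_div, div_eq_inv_mul, neg_mul]
  have hexponent : (p * s - 1 + 1) / p = s := by field_simp; ring
  simp_rw [hexp]
  rw [integral_rpow_mul_exp_neg_mul_rpow hp (by nlinarith) (inv_pos.2 hc), neg_div, hexponent,
    rpow_neg (inv_nonneg.2 hc.le), inv_rpow hc.le, inv_inv]
  ring

theorem density_mul_moment_weight_eq {ω κ α α' β β' r : ℝ} (hω : 0 < ω) (hr : 0 < r)
    (n m : ℕ) :
    ((α / ω ^ α') * (ω ^ (β' - α') * r ^ (2 * (α - β))) ^ (κ * m) *
        r ^ (2 * (α - 1)) * exp (-(r ^ (2 * α)) / ω ^ α')) *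
      (r ^ (2 * (α * n + β * κ * m) + 1) / ω ^ (α' * n + β' * κ * m))
      = α / ω ^ (α' * (1 + κ * m + n)) *
        (r ^ (2 * α * (1 + κ * m + n) - 1) * exp (-r ^ (2 * α) / ω ^ α')) := by
  have hr_pow : r ^ (2 * α * (1 + κ * m + n) - 1) =
      r ^ (2 * (α - β) * (κ * m)) * r ^ (2 * (α - 1)) *
        r ^ (2 * (α * n + β * κ * m) + 1) := by
    rw [← rpow_add hr, ← rpow_add hr]; ring_nf
  have hω_pow : ω ^ (α' * (1 + κ * m + n)) =
      ω ^ α' * ω ^ (α' * n + β' * κ * m) / ω ^ ((β' - α') * (κ * m)) := by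
    rw [← rpow_add hω, ← rpow_sub hω]; ring_nf
  rw [mul_rpow (by positivity) (by positivity), ← rpow_mul hω.le, ← rpow_mul hr.le, hr_pow,
    hω_pow]
  field_simp

/-- Solution of the generalized moment problem for the sub-classes of `γ`-deformed
second-class coherent states with one degree of freedom: the density
`ϱ(r) = (α/ω^α') (ω^(β'-α') r^(2(α-β)))^(κm) r^(2(α-1)) exp(-r^(2α)/ω^α')` satisfies
`2 ∫₀^∞ ϱ(r) r^(2(αn+βκm)+1) / ω^(α'n+β'κm) dr = Γ(1+κm+n)`. -/
theorem generalized_moment_problem_second_class (ω κ α α' β β' : ℝ)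
    (hω : 0 < ω) (hκ : 0 ≤ κ) (hα : 0 < α) (n m : ℕ) :
    2 * ∫ r in Set.Ioi (0 : ℝ),
        ((α / ω ^ α') * (ω ^ (β' - α') * r ^ (2 * (α - β))) ^ (κ * m) *
            r ^ (2 * (α - 1)) * Real.exp (-(r ^ (2 * α)) / ω ^ α')) *
          (r ^ (2 * (α * n + β * κ * m) + 1) / ω ^ (α' * n + β' * κ * m))
      = Real.Gamma (1 + κ * m + n) := by
  have hs : 0 < 1 + κ * m + n := by positivity
  rw [setIntegral_congr_fun measurableSet_Ioi fun r hr => density_mul_moment_weight_eq hω hr n m,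
    integral_const_mul,
    integral_rpow_mul_exp_neg_rpow_div (by positivity) hs (rpow_pos_of_pos hω α'),
    ← rpow_mul hω.le]
  field_simp
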